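/- A real $n \times n$ matrix $A$ satisfies $A(\mathbb{R}^n_+) \subseteq \mathbb{R}^n_+$ (i.e. $A$ is entrywise nonnegative) if and only if for every matrix $B$ that is $\mathbb{R}^n_+$-semipositive (i.e. there exists a vector $x$ with all entries positive such that $Bx$ has all entries positive), the matrix $A + B$ is $\mathbb{R}^n_+$-semipositive. -/
import Mathlib


open Matrix Set

/-- The nonnegative orthant in `ℝ^n`. -/
def orthant (n : ℕ) : Set (Fin n → ℝ) := {x | ∀ i, 0 ≤ x i}

/-- `A` is `ℝ^n_+`-semipositive: some vector with all entries positive is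
mapped to a vector with all entries positive. -/
def Semipositive {n : ℕ} (A : Matrix (Fin n) (Fin n) ℝ) : Prop :=
  ∃ x : Fin n → ℝ, (∀ i, 0 < x i) ∧ (∀ i, 0 < A.mulVec x i)

theorem stmt_3 {n : ℕ} (A : Matrix (Fin n) (Fin n) ℝ) :
    (∀ x ∈ orthant n, A.mulVec x ∈ orthant n) ↔
      (∀ B : Matrix (Fin n) (Fin n) ℝ, Semipositive B → Semipositive (A + B)) := by
  constructor
  · rintro h B ⟨x, hx, hBx⟩
    refine ⟨x, hx, fun i => ?_⟩
    have h1 : 0 ≤ A.mulVec x i := h x (fun j => (hx j).le) i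
    have h2 := hBx i
    have h3 : (A + B).mulVec x i = A.mulVec x i + B.mulVec x i := by
      rw [Matrix.add_mulVec]; rfl
    rw [h3]; linarith
  · intro h
    have hA : ∀ i j, 0 ≤ A i j := by
      intro i0 j0
      by_contra hneg
      push_neg at hneg
      set a := A i0 j0 with ha
      set M : ℝ := ∑ j, |A i0 j| with hM
      set T : ℝ := max 1 (2 * (M + 1) / (-a)) with hT
      have hT1 : 1 ≤ T := le_max_left _ _
      have hT2 : 2 * (M + 1) / (-a) ≤ T := le_max_right _ _
      have hTa : M + 1 ≤ (-a / 2) * T := by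
        have hpos : 0 < -a := by linarith
        rw [div_le_iff₀ hpos] at hT2
        nlinarith
      set B : Matrix (Fin n) (Fin n) ℝ :=
        fun i j => if i = i0 then (if j = j0 then -a / 2 else -(A i j)) else 1 with hB
      set x : Fin n → ℝ := fun j => if j = j0 then T else 1 with hxdef
      have hxpos : ∀ j, 0 < x j := by
        intro j; simp only [hxdef]; split <;> linarith
      have hBsemi : Semipositive B := by
        refine ⟨x, hxpos, fun i => ?_⟩
        by_cases hi : i = i0
        · rw [hi]
          have hsplit : B.mulVec x i0 =
              (-a / 2) * T + ∑ j ∈ Finset.univ.erase j0, -(A i0 j) := by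
            rw [Matrix.mulVec, dotProduct,
              ← Finset.add_sum_erase _ _ (Finset.mem_univ j0)]
            have h0 : B i0 j0 * x j0 = (-a / 2) * T := by simp [hB, hxdef]
            rw [h0]
            congr 1
            refine Finset.sum_congr rfl fun j hj => ?_
            have hjne : j ≠ j0 := Finset.ne_of_mem_erase hj
            simp [hB, hxdef, hjne]
          have hbound : -M ≤ ∑ j ∈ Finset.univ.erase j0, -(A i0 j) := by
            have h1 : ∑ j ∈ Finset.univ.erase j0, -|A i0 j|
                ≤ ∑ j ∈ Finset.univ.erase j0, -(A i0 j) := by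
              refine Finset.sum_le_sum fun j _ => ?_
              have := le_abs_self (A i0 j); linarith
            have h2 : ∑ j ∈ Finset.univ.erase j0, |A i0 j| ≤ M := by
              rw [hM]
              exact Finset.sum_le_sum_of_subset_of_nonneg
                (Finset.erase_subset _ _) (fun j _ _ => abs_nonneg _)
            have h3 : ∑ j ∈ Finset.univ.erase j0, -|A i0 j|
                = -∑ j ∈ Finset.univ.erase j0, |A i0 j| := by
              simp
            linarith
          rw [hsplit]; linarith
        · have : B.mulVec x i = ∑ j, x j := by
            rw [Matrix.mulVec, dotProduct]
            refine Finset.sum_congr rfl fun j _ => ?_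
            simp [hB, hi]
          rw [this]
          exact Finset.sum_pos (fun j _ => hxpos j) ⟨i, Finset.mem_univ i⟩
      obtain ⟨y, hy, hABy⟩ := h B hBsemi
      have hval : (A + B).mulVec y i0 = (a / 2) * y j0 := by
        rw [Matrix.mulVec, dotProduct]
        rw [Finset.sum_eq_single_of_mem j0 (Finset.mem_univ j0)]
        · have hb : B i0 j0 = -a / 2 := by simp [hB]
          rw [Matrix.add_apply, hb, ← ha]; ring
        · intro j _ hjne
          have hb : B i0 j = -(A i0 j) := by simp [hB, hjne]
          rw [Matrix.add_apply, hb]; ring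
      have := hABy i0
      rw [hval] at this
      have := hy j0
      nlinarith
    intro x hx i
    rw [Matrix.mulVec, dotProduct]
    exact Finset.sum_nonneg fun j _ => mul_nonneg (hA i j) (hx j)
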